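/- arXiv:2106.12955 — 2 statements merged into one kernel-verified Lean document; each statement's English description precedes it below -/
import Mathlib

section
/- Let A be a real n×m matrix of rank r and let k < r. Among all n×m matrices B of rank at most k, the Frobenius-norm distance ‖A − B‖ is minimized by the truncated singular value decomposition A_k = Σ_{i=1}^k σ_i U_i V_iᵀ; that is, for every n×m matrix B with rank(B) ≤ k one has ‖A − A_k‖ ≤ ‖A − B‖ (Eckart–Young–Mirsky theorem for the Frobenius norm). -/
open Matrix BigOperators

/-- Squared Frobenius norm of a real matrix. -/
noncomputable def frobSq {n m : ℕ} (X : Matrix (Fin n) (Fin m) ℝ) : ℝ :=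
  ∑ i, ∑ j, (X i j) ^ 2

/-- Frobenius norm of a real matrix. -/
noncomputable def frobNorm {n m : ℕ} (X : Matrix (Fin n) (Fin m) ℝ) : ℝ :=
  Real.sqrt (frobSq X)

/-! By orthogonal invariance of the Frobenius norm it suffices to treat the rectangular diagonal
matrix `S`, for which `A - Aₖ` becomes the tail `σₖ, σₖ₊₁, …` of the diagonal. If `B` has rank
at most `k`, choose an orthonormal basis `v₁, …, v_d`, `d ≤ k`, of its column space. Replacing each
column of `B` by the projection of the corresponding column of `S` can only decrease the distance,
so `‖S - B‖² ≥ ‖S‖² - ∑ᵢ σᵢ² tᵢ` with `tᵢ = ∑ₗ vₗ(i)²`. Bessel's inequality gives `0 ≤ tᵢ ≤ 1`,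
and `∑ᵢ tᵢ = d ≤ k`; as the `σᵢ²` decrease, `∑ᵢ σᵢ² tᵢ ≤ ∑_{i<k} σᵢ² = ‖S‖² - ‖S - Sₖ‖²`. -/

open Finset

section

variable {n m : ℕ}

lemma frobSq_eq_trace (X : Matrix (Fin n) (Fin m) ℝ) : frobSq X = trace (X * Xᵀ) := by
  simp [frobSq, trace, mul_apply, sq]

lemma frobSq_mul_mul_transpose {U : Matrix (Fin n) (Fin n) ℝ} {V : Matrix (Fin m) (Fin m) ℝ}
    (hU : Uᵀ * U = 1) (hV : Vᵀ * V = 1) (X : Matrix (Fin n) (Fin m) ℝ) :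
    frobSq (U * X * Vᵀ) = frobSq X := by
  have h : U * X * Vᵀ * (U * X * Vᵀ)ᵀ = U * (X * Xᵀ) * Uᵀ := by
    simp only [transpose_mul, transpose_transpose, Matrix.mul_assoc]
    rw [← Matrix.mul_assoc Vᵀ V, hV, Matrix.one_mul]
  rw [frobSq_eq_trace, frobSq_eq_trace, h, trace_mul_cycle, ← Matrix.mul_assoc, hU,
    Matrix.one_mul]

lemma frobSq_eq_sum_norm_col_sq (X : Matrix (Fin n) (Fin m) ℝ) :
    frobSq X = ∑ j, ‖WithLp.toLp 2 (X.col j)‖ ^ 2 := by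
  rw [frobSq, sum_comm]
  simp [EuclideanSpace.norm_sq_eq]

lemma Orthonormal.norm_sq_sub_sum_inner_sq_le {E ι : Type*} [NormedAddCommGroup E]
    [InnerProductSpace ℝ E] [Fintype ι] {v : ι → E} (hv : Orthonormal ℝ v) (s : E) {x : E}
    (hx : x ∈ Submodule.span ℝ (Set.range v)) :
    ‖s‖ ^ 2 - ∑ l, inner ℝ (v l) s ^ 2 ≤ ‖s - x‖ ^ 2 := by
  obtain ⟨c, rfl⟩ := (Submodule.mem_span_range_iff_exists_fun ℝ).mp hx
  have hsx : inner ℝ s (∑ l, c l • v l) = ∑ l, c l * inner ℝ (v l) s := by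
    simp [inner_sum, real_inner_smul_right, real_inner_comm]
  have hxx : ‖∑ l, c l • v l‖ ^ 2 = ∑ l, c l ^ 2 := by
    rw [← real_inner_self_eq_norm_sq, hv.inner_sum]
    simp [sq]
  -- completing the square: the gap is `∑ l, (c l - ⟪v l, s⟫) ^ 2`
  have hsq : ∑ l, (c l - inner ℝ (v l) s) ^ 2
      = ∑ l, c l ^ 2 - 2 * ∑ l, c l * inner ℝ (v l) s + ∑ l, inner ℝ (v l) s ^ 2 := by
    simp only [sub_sq, sum_add_distrib, sum_sub_distrib, mul_sum, mul_assoc]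
  rw [norm_sub_sq_real, hsx, hxx]
  linarith [sum_nonneg fun l (_ : l ∈ univ) => sq_nonneg (c l - inner ℝ (v l) s)]

lemma Orthonormal.sum_sq_apply_le_one {ι κ : Type*} [Fintype ι] [Fintype κ] [DecidableEq κ]
    {v : ι → EuclideanSpace ℝ κ} (hv : Orthonormal ℝ v) (i : κ) :
    ∑ l, v l i ^ 2 ≤ 1 := by
  simpa [EuclideanSpace.inner_single_right] using
    hv.sum_inner_products_le (EuclideanSpace.single i (1 : ℝ)) (s := univ)

lemma Orthonormal.sum_sum_sq_apply {ι κ : Type*} [Fintype ι] [Fintype κ]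
    {v : ι → EuclideanSpace ℝ κ} (hv : Orthonormal ℝ v) :
    ∑ i, ∑ l, v l i ^ 2 = Fintype.card ι := by
  have hnorm : ∀ l, ∑ i, v l i ^ 2 = 1 := fun l => by
    simpa [hv.1 l] using (EuclideanSpace.norm_sq_eq (v l)).symm
  simp [sum_comm (γ := κ), hnorm]

lemma exists_orthonormal_span_col_of_rank_le {k : ℕ} (B : Matrix (Fin n) (Fin m) ℝ)
    (hB : B.rank ≤ k) :
    ∃ d ≤ k, ∃ v : Fin d → EuclideanSpace ℝ (Fin n), Orthonormal ℝ v ∧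
      ∀ j, WithLp.toLp 2 (B.col j) ∈ Submodule.span ℝ (Set.range v) := by
  set W := Submodule.span ℝ (Set.range fun j => WithLp.toLp 2 (B.col j))
  have hW : Module.finrank ℝ W = B.rank := by
    rw [rank_eq_finrank_span_cols, ← (WithLp.linearEquiv 2 ℝ (Fin n → ℝ)).symm.finrank_map_eq,
      ← Submodule.span_image, ← Set.range_comp]
    rfl
  let b := stdOrthonormalBasis ℝ W
  refine ⟨_, hW.trans_le hB, fun l => b l, b.orthonormal.comp_linearIsometry W.subtypeₗᵢ,
    fun j => ?_⟩
  have hj : WithLp.toLp 2 (B.col j) ∈ W := Submodule.subset_span ⟨j, rfl⟩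
  refine (Submodule.mem_span_range_iff_exists_fun ℝ).mpr ⟨b.repr ⟨_, hj⟩, ?_⟩
  simpa using congrArg Subtype.val (b.sum_repr ⟨_, hj⟩)

lemma exists_orthonormal_frobSq_sub_le {k : ℕ} (X B : Matrix (Fin n) (Fin m) ℝ)
    (hB : B.rank ≤ k) :
    ∃ d ≤ k, ∃ v : Fin d → EuclideanSpace ℝ (Fin n), Orthonormal ℝ v ∧
      frobSq X - ∑ l, ∑ j, inner ℝ (v l) (WithLp.toLp 2 (X.col j)) ^ 2 ≤ frobSq (X - B) := by
  obtain ⟨d, hdk, v, hv, hcol⟩ := exists_orthonormal_span_col_of_rank_le B hB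
  refine ⟨d, hdk, v, hv, ?_⟩
  rw [frobSq_eq_sum_norm_col_sq, frobSq_eq_sum_norm_col_sq, sum_comm, ← sum_sub_distrib]
  refine sum_le_sum fun j _ => ?_
  rw [show (X - B).col j = X.col j - B.col j from rfl, WithLp.toLp_sub]
  exact hv.norm_sq_sub_sum_inner_sq_le _ (hcol j)

lemma sum_inner_col_sq (X : Matrix (Fin n) (Fin m) ℝ) (v : EuclideanSpace ℝ (Fin n)) :
    ∑ j, inner ℝ v (WithLp.toLp 2 (X.col j)) ^ 2 = v.ofLp ⬝ᵥ (X * Xᵀ) *ᵥ v.ofLp := by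
  rw [← mulVec_mulVec, dotProduct_mulVec, mulVec_transpose]
  simp [EuclideanSpace.inner_eq_star_dotProduct, dotProduct, vecMul, sq, mul_comm]

lemma sum_mul_le_sum_of_sum_le_card {ι : Type*} [Fintype ι] (s : Finset ι) {w t : ι → ℝ} {c : ℝ}
    (hc : 0 ≤ c) (hws : ∀ i ∈ s, c ≤ w i) (hwc : ∀ i ∉ s, w i ≤ c) (ht0 : ∀ i, 0 ≤ t i)
    (ht1 : ∀ i, t i ≤ 1) (hts : ∑ i, t i ≤ #s) :
    ∑ i, w i * t i ≤ ∑ i ∈ s, w i := by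
  classical
  have hle : ∀ i, w i * t i ≤ c * t i + if i ∈ s then w i - c else 0 := by
    intro i
    split_ifs with hi
    · nlinarith [hws i hi, ht1 i]
    · nlinarith [hwc i hi, ht0 i]
  calc ∑ i, w i * t i ≤ ∑ i, (c * t i + if i ∈ s then w i - c else 0) :=
        sum_le_sum fun i _ => hle i
    _ = c * ∑ i, t i + ∑ i ∈ s, (w i - c) := by
      rw [sum_add_distrib, mul_sum, sum_ite_mem, univ_inter]
    _ ≤ c * #s + ∑ i ∈ s, (w i - c) := by gcongr
    _ = ∑ i ∈ s, w i := by rw [sum_sub_distrib, sum_const, nsmul_eq_mul]; ring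

def rectDiag (n m : ℕ) (σ : ℕ → ℝ) : Matrix (Fin n) (Fin m) ℝ :=
  of fun i j => if (i : ℕ) = j then σ i else 0

lemma rectDiag_sub (σ τ : ℕ → ℝ) : rectDiag n m (σ - τ) = rectDiag n m σ - rectDiag n m τ := by
  ext i j
  simp only [rectDiag, of_apply, Matrix.sub_apply, Pi.sub_apply]
  split_ifs <;> simp

lemma rectDiag_mul_transpose (σ : ℕ → ℝ) :
    rectDiag n m σ * (rectDiag n m σ)ᵀ
      = diagonal fun i : Fin n => if (i : ℕ) < m then σ i ^ 2 else 0 := by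
  ext i i'
  simp only [mul_apply, rectDiag, transpose_apply, of_apply]
  rw [Fin.sum_univ_eq_sum_range (fun j => (if (i : ℕ) = j then σ i else 0) *
    (if (i' : ℕ) = j then σ i' else 0))]
  simp only [diagonal_apply, ite_mul, zero_mul, sum_ite_eq, mem_range, Fin.ext_iff, sq]
  by_cases h : (i : ℕ) = i'
  · simp [h]
  · simp [h, Ne.symm h]

lemma frobSq_rectDiag (σ : ℕ → ℝ) :
    frobSq (rectDiag n m σ) = ∑ i : Fin n, if (i : ℕ) < m then σ i ^ 2 else 0 := by
  rw [frobSq_eq_trace, rectDiag_mul_transpose, trace_diagonal]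

theorem frobSq_rectDiag_indicator_Ici_le {k : ℕ} (hkn : k ≤ n) {σ : ℕ → ℝ}
    (hσ0 : ∀ i, 0 ≤ σ i) (hσ : Antitone σ) (B : Matrix (Fin n) (Fin m) ℝ) (hB : B.rank ≤ k) :
    frobSq (rectDiag n m ((Set.Ici k).indicator σ)) ≤ frobSq (rectDiag n m σ - B) := by
  obtain ⟨d, hdk, v, hv, hlow⟩ := exists_orthonormal_frobSq_sub_le (rectDiag n m σ) B hB
  set μ : ℕ → ℝ := fun i => if i < m then σ i ^ 2 else 0
  have hμ0 : ∀ i, 0 ≤ μ i := fun i => by positivity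
  have hμ : Antitone μ := by
    intro a b hab
    simp only [μ]
    split_ifs with hb ha
    · exact pow_le_pow_left₀ (hσ0 b) (hσ hab) 2
    · omega
    · positivity
    · rfl
  set s : Finset (Fin n) := univ.filter fun i => (i : ℕ) < k
  have hs : #s = k := by
    simp [s, Fin.card_filter_val_lt, hkn]
  have hproj : ∑ l, ∑ j, inner ℝ (v l) (WithLp.toLp 2 ((rectDiag n m σ).col j)) ^ 2
      = ∑ i : Fin n, μ i * ∑ l, v l i ^ 2 := by
    simp only [sum_inner_col_sq, rectDiag_mul_transpose, dotProduct, mulVec_diagonal]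
    rw [sum_comm]
    simp only [mul_sum]
    refine sum_congr rfl fun i _ => sum_congr rfl fun l _ => by ring
  have hbound : ∑ i : Fin n, μ i * ∑ l, v l i ^ 2 ≤ ∑ i ∈ s, μ i := by
    refine sum_mul_le_sum_of_sum_le_card s (hμ0 k) (fun i hi => hμ ?_) (fun i hi => hμ ?_)
      (fun i => sum_nonneg fun l _ => sq_nonneg _) hv.sum_sq_apply_le_one ?_
    · simp only [s, mem_filter] at hi
      exact hi.2.le
    · simpa [s] using hi
    · rw [hv.sum_sum_sq_apply, hs, Fintype.card_fin]
      exact_mod_cast hdk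
  have hsplit : frobSq (rectDiag n m σ)
      = frobSq (rectDiag n m ((Set.Ici k).indicator σ)) + ∑ i ∈ s, μ i := by
    rw [frobSq_rectDiag, frobSq_rectDiag,
      ← sum_filter_not_add_sum_filter univ fun i : Fin n => (i : ℕ) < k]
    congr 1
    rw [sum_filter]
    refine sum_congr rfl fun i _ => ?_
    by_cases hik : (i : ℕ) < k <;> simp [hik, Set.indicator, le_of_not_gt]
  linarith

lemma mul_single_one_mul_transpose {l o p q R : Type*} [Fintype p] [Fintype q] [DecidableEq p]
    [DecidableEq q] [CommSemiring R] (U : Matrix l p R) (V : Matrix o q R) (i : p) (j : q) :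
    U * single i j (1 : R) * Vᵀ = vecMulVec (U.col i) (V.col j) := by
  rw [single_eq_single_vecMulVec_single, mul_vecMulVec, vecMulVec_mul, mulVec_single_one,
    single_one_vecMul]
  rfl

lemma rectDiag_indicator_Iio_eq_sum {k : ℕ} (hkn : k ≤ n) (hkm : k ≤ m) (σ : ℕ → ℝ) :
    rectDiag n m ((Set.Iio k).indicator σ)
      = ∑ l : Fin k, σ l • single (Fin.castLE hkn l) (Fin.castLE hkm l) (1 : ℝ) := by
  ext i j
  simp only [rectDiag, of_apply, Matrix.sum_apply, Matrix.smul_apply, single_apply, Fin.ext_iff,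
    Fin.val_castLE]
  rw [Fin.sum_univ_eq_sum_range (fun x => σ x • if x = i ∧ x = j then (1 : ℝ) else 0)]
  by_cases hij : (i : ℕ) = j <;> simp [hij, ite_and, Set.indicator_apply]

lemma mul_rectDiag_indicator_Iio_mul_transpose {k : ℕ} (hkn : k ≤ n) (hkm : k ≤ m)
    (U : Matrix (Fin n) (Fin n) ℝ) (V : Matrix (Fin m) (Fin m) ℝ) (σ : ℕ → ℝ) :
    U * rectDiag n m ((Set.Iio k).indicator σ) * Vᵀ = ∑ i : Fin k, σ (i : ℕ) •
      vecMulVec (fun a => U a (Fin.castLE hkn i)) (fun b => V b (Fin.castLE hkm i)) := by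
  simp only [rectDiag_indicator_Iio_eq_sum hkn hkm, Matrix.mul_sum, Matrix.sum_mul,
    Matrix.mul_smul, Matrix.smul_mul, mul_single_one_mul_transpose]
  rfl

end

theorem eckart_young_mirsky_general {n m r k : ℕ} (hkn : k ≤ n) (hkm : k ≤ m)
    (A : Matrix (Fin n) (Fin m) ℝ)
    (U : Matrix (Fin n) (Fin n) ℝ) (V : Matrix (Fin m) (Fin m) ℝ)
    (S : Matrix (Fin n) (Fin m) ℝ) (σ : ℕ → ℝ)
    (hU : Uᵀ * U = 1) (hU' : U * Uᵀ = 1)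
    (hV : Vᵀ * V = 1) (hV' : V * Vᵀ = 1)
    (hS : ∀ i j, S i j = if (i : ℕ) = (j : ℕ) then σ (i : ℕ) else 0)
    (hσzero : ∀ i, r ≤ i → σ i = 0)
    (hσsorted : ∀ i j, i ≤ j → σ j ≤ σ i)
    (hA : A = U * S * Vᵀ)
    (Ak : Matrix (Fin n) (Fin m) ℝ)
    (hAk : Ak = ∑ i : Fin k,
      σ (i : ℕ) • vecMulVec (fun a => U a (Fin.castLE hkn i)) (fun b => V b (Fin.castLE hkm i))) :
    ∀ B : Matrix (Fin n) (Fin m) ℝ, B.rank ≤ k →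
      frobNorm (A - Ak) ≤ frobNorm (A - B) := by
  intro B hB
  have hσ0 : ∀ i, 0 ≤ σ i := fun i =>
    (hσzero _ (le_max_right i r)).symm.le.trans (hσsorted _ _ (le_max_left i r))
  have hS' : S = rectDiag n m σ := by
    ext i j
    exact hS i j
  have hAk_sub : A - Ak = U * rectDiag n m ((Set.Ici k).indicator σ) * Vᵀ := by
    rw [hA, hAk, hS', ← mul_rectDiag_indicator_Iio_mul_transpose hkn hkm, ← Matrix.sub_mul,
      ← Matrix.mul_sub, ← rectDiag_sub, ← Set.indicator_compl, Set.compl_Iio]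
  have hB_sub : A - B = U * (rectDiag n m σ - Uᵀ * B * V) * Vᵀ := by
    have hB_conj : U * (Uᵀ * B * V) * Vᵀ = B := by
      rw [← Matrix.mul_assoc, ← Matrix.mul_assoc, hU', Matrix.one_mul, Matrix.mul_assoc, hV',
        Matrix.mul_one]
    rw [Matrix.mul_sub, Matrix.sub_mul, hB_conj, hA, hS']
  have hB_rank : (Uᵀ * B * V).rank ≤ k :=
    (rank_mul_le_left _ _).trans ((rank_mul_le_right _ _).trans hB)
  refine Real.sqrt_le_sqrt ?_
  rw [hAk_sub, hB_sub, frobSq_mul_mul_transpose hU hV, frobSq_mul_mul_transpose hU hV]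
  exact frobSq_rectDiag_indicator_Ici_le hkn hσ0 hσsorted _ hB_rank

/-- **Eckart–Young–Mirsky theorem** (Frobenius norm): the best rank-`k`
approximation of `A` is given by the truncated SVD `Aₖ = ∑_{i<k} σᵢ Uᵢ Vᵢᵀ`. -/
theorem eckart_young_mirsky {n m r k : ℕ} (hkn : k ≤ n) (hkm : k ≤ m)
    (A : Matrix (Fin n) (Fin m) ℝ)
    (U : Matrix (Fin n) (Fin n) ℝ) (V : Matrix (Fin m) (Fin m) ℝ)
    (S : Matrix (Fin n) (Fin m) ℝ) (σ : ℕ → ℝ)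
    (hU : Uᵀ * U = 1) (hU' : U * Uᵀ = 1)
    (hV : Vᵀ * V = 1) (hV' : V * Vᵀ = 1)
    (hS : ∀ i j, S i j = if (i : ℕ) = (j : ℕ) then σ (i : ℕ) else 0)
    (hσpos : ∀ i, i < r → 0 < σ i)
    (hσzero : ∀ i, r ≤ i → σ i = 0)
    (hσsorted : ∀ i j, i ≤ j → σ j ≤ σ i)
    (hA : A = U * S * Vᵀ)
    (hrank : A.rank = r) (hk : k < r)
    (Ak : Matrix (Fin n) (Fin m) ℝ)
    (hAk : Ak = ∑ i : Fin k,
      σ (i : ℕ) • vecMulVec (fun a => U a (Fin.castLE hkn i)) (fun b => V b (Fin.castLE hkm i))) :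
    ∀ B : Matrix (Fin n) (Fin m) ℝ, B.rank ≤ k →
      frobNorm (A - Ak) ≤ frobNorm (A - B) :=
  eckart_young_mirsky_general hkn hkm A U V S σ hU hU' hV hV' hS hσzero hσsorted hA Ak hAk
end

section
/- Regularised PCA: Let A be a real n×m matrix of rank r, k ≤ r, D ∈ ℝ^{d×n}, G ∈ ℝ^{g×m}, λ, μ ≥ 0, L = DᵀD, M = GᵀG, and F(P,Q) = ‖A − PQᵀ‖² + λ‖DP‖² + μ‖GQ‖². Define the symmetric m×m matrix K = Aᵀ(Iₙ + λL)⁻¹A − μM. Then the constrained minimization of F(P,Q) over P ∈ ℝ^{n×k}, Q ∈ ℝ^{m×k} subject to QᵀQ = I_k is solved by taking the columns of Q to be orthonormal eigenvectors of K corresponding to its k largest eigenvalues and P = (Iₙ + λL)⁻¹AQ; the minimal value equals Tr(AAᵀ) minus the sum of the k largest eigenvalues of K. -/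
open Matrix BigOperators

/-!
With `B = Iₙ + λL` positive definite and `QᵀQ = I`, completing the square in `P` gives
`F(P, Q) = Tr(AAᵀ) + Tr((P - B⁻¹AQ)ᵀ B (P - B⁻¹AQ)) - Tr(QᵀKQ)`,
so the best `P` is `B⁻¹AQ` and it remains to maximise `Tr(QᵀKQ)` (Ky Fan). If the rows of `W` are
the eigenvectors of `K` and `C = WQ`, then `Tr(QᵀKQ) = ∑ⱼ eigⱼ (CCᵀ)ⱼⱼ`, and since `CCᵀ` is an
orthogonal projection of rank `k` these weights lie in `[0, 1]` and sum to `k`. Such a weighted sum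
of decreasing eigenvalues is at most the sum of the first `k`, which the top eigenvectors attain.
-/

lemma frobSq_eq_trace_transpose_mul {n m : ℕ} (X : Matrix (Fin n) (Fin m) ℝ) :
    frobSq X = trace (Xᵀ * X) := by
  simp only [frobSq, trace, Matrix.diag, mul_apply, transpose_apply, sq]
  exact Finset.sum_comm

lemma frobSq_eq_trace_mul_transpose {n m : ℕ} (X : Matrix (Fin n) (Fin m) ℝ) :
    frobSq X = trace (X * Xᵀ) := by
  rw [frobSq_eq_trace_transpose_mul, trace_mul_comm]

lemma frobSq_mul {d n k : ℕ} (D : Matrix (Fin d) (Fin n) ℝ) (P : Matrix (Fin n) (Fin k) ℝ) :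
    frobSq (D * P) = trace (Pᵀ * (Dᵀ * D) * P) := by
  simp only [frobSq_eq_trace_transpose_mul, transpose_mul, Matrix.mul_assoc]

lemma frobSq_sub_mul_transpose {n m k : ℕ} (A : Matrix (Fin n) (Fin m) ℝ)
    (P : Matrix (Fin n) (Fin k) ℝ) {Q : Matrix (Fin m) (Fin k) ℝ} (hQ : Qᵀ * Q = 1) :
    frobSq (A - P * Qᵀ) = trace (A * Aᵀ) - 2 * trace (Pᵀ * A * Q) + trace (Pᵀ * P) := by
  have hcross : trace (A * (Q * Pᵀ)) = trace (Pᵀ * A * Q) := by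
    rw [← Matrix.mul_assoc, trace_mul_cycle]
  have hcross' : trace (P * Qᵀ * Aᵀ) = trace (Pᵀ * A * Q) := by
    rw [← trace_transpose]
    simpa only [transpose_mul, transpose_transpose] using hcross
  have hsq : trace (P * Qᵀ * (Q * Pᵀ)) = trace (Pᵀ * P) := by
    rw [Matrix.mul_assoc, ← Matrix.mul_assoc Qᵀ, hQ, Matrix.one_mul, trace_mul_comm]
  simp only [frobSq_eq_trace_mul_transpose, transpose_sub, transpose_mul, transpose_transpose,
    Matrix.sub_mul, Matrix.mul_sub, trace_sub, hcross, hcross', hsq]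
  ring

lemma trace_complete_square {ι κ : Type*} [Fintype ι] [DecidableEq ι] [Fintype κ]
    {B : Matrix ι ι ℝ} (hBsymm : B.IsSymm) (hB : IsUnit B.det) (P Y : Matrix ι κ ℝ) :
    trace ((P - B⁻¹ * Y)ᵀ * B * (P - B⁻¹ * Y))
      = trace (Pᵀ * B * P) - 2 * trace (Pᵀ * Y) + trace (Yᵀ * B⁻¹ * Y) := by
  set R := B⁻¹ * Y
  have hBR : B * R = Y := by rw [← Matrix.mul_assoc, mul_nonsing_inv B hB, Matrix.one_mul]
  have hRB : Rᵀ * B = Yᵀ := by rw [← hBsymm.eq, ← transpose_mul, hBR]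
  have hRBP : trace (Rᵀ * B * P) = trace (Pᵀ * Y) := by
    rw [hRB, ← trace_transpose, transpose_mul, transpose_transpose]
  have hRBR : trace (Rᵀ * B * R) = trace (Yᵀ * B⁻¹ * Y) := by
    rw [hRB, Matrix.mul_assoc]
  simp only [transpose_sub, Matrix.sub_mul, Matrix.mul_sub, trace_sub, hRBP, hRBR]
  rw [Matrix.mul_assoc Pᵀ B R, hBR]
  ring

lemma posDef_one_add_smul_transpose_mul_self {ι κ : Type*} [Fintype ι] [Fintype κ]
    [DecidableEq κ] (D : Matrix ι κ ℝ) {lam : ℝ} (hlam : 0 ≤ lam) : (1 + lam • (Dᵀ * D)).PosDef :=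
  PosDef.one.add_posSemidef ((posSemidef_conjTranspose_mul_self D).smul hlam)

lemma regularised_objective_eq {n m d g k : ℕ} (A : Matrix (Fin n) (Fin m) ℝ)
    (D : Matrix (Fin d) (Fin n) ℝ) (G : Matrix (Fin g) (Fin m) ℝ) (lam mu : ℝ)
    (hB : IsUnit (1 + lam • (Dᵀ * D)).det) (P : Matrix (Fin n) (Fin k) ℝ)
    {Q : Matrix (Fin m) (Fin k) ℝ} (hQ : Qᵀ * Q = 1) :
    frobSq (A - P * Qᵀ) + lam * frobSq (D * P) + mu * frobSq (G * Q)
      = trace (A * Aᵀ)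
        + trace ((P - (1 + lam • (Dᵀ * D))⁻¹ * (A * Q))ᵀ * (1 + lam • (Dᵀ * D))
            * (P - (1 + lam • (Dᵀ * D))⁻¹ * (A * Q)))
        - trace (Qᵀ * (Aᵀ * (1 + lam • (Dᵀ * D))⁻¹ * A - mu • (Gᵀ * G)) * Q) := by
  have hBsymm : (1 + lam • (Dᵀ * D)).IsSymm := by
    simp [IsSymm, transpose_add, transpose_smul, transpose_mul]
  rw [trace_complete_square hBsymm hB, frobSq_sub_mul_transpose A P hQ, frobSq_mul, frobSq_mul]
  simp only [Matrix.mul_add, Matrix.add_mul, Matrix.mul_sub, Matrix.sub_mul, Matrix.mul_smul,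
    Matrix.smul_mul, Matrix.mul_one, trace_add, trace_sub, trace_smul, smul_eq_mul,
    transpose_mul, Matrix.mul_assoc]
  ring

section Eigenvectors

variable {ι κ : Type*} [Fintype ι] [DecidableEq κ]

lemma of_mul_transpose_of_eq_one {v : κ → ι → ℝ}
    (hv : ∀ i j, v i ⬝ᵥ v j = if i = j then 1 else 0) : of v * (of v)ᵀ = 1 := by
  ext i j
  simpa [mul_apply, dotProduct, one_apply] using hv i j

lemma mul_transpose_of_eq_transpose_of_mul_diagonal [Fintype κ] {K : Matrix ι ι ℝ}
    {v : κ → ι → ℝ} {e : κ → ℝ} (he : ∀ i, K *ᵥ v i = e i • v i) :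
    K * (of v)ᵀ = (of v)ᵀ * diagonal e := by
  ext a i
  rw [mul_diagonal]
  simpa [mul_apply, mulVec, dotProduct, mul_comm] using congrFun (he i) a

lemma trace_of_mul_mul_transpose_of [Fintype κ] {K : Matrix ι ι ℝ} {v : κ → ι → ℝ} {e : κ → ℝ}
    (hv : ∀ i j, v i ⬝ᵥ v j = if i = j then 1 else 0)
    (he : ∀ i, K *ᵥ v i = e i • v i) : trace (of v * K * (of v)ᵀ) = ∑ i, e i := by
  rw [Matrix.mul_assoc, mul_transpose_of_eq_transpose_of_mul_diagonal he, ← Matrix.mul_assoc,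
    of_mul_transpose_of_eq_one hv, Matrix.one_mul, trace_diagonal]

end Eigenvectors

lemma diag_mul_transpose_le_one {ι κ : Type*} [Fintype ι] [Fintype κ] [DecidableEq ι]
    [DecidableEq κ] {C : Matrix ι κ ℝ} (hC : Cᵀ * C = 1) (j : ι) : (C * Cᵀ) j j ≤ 1 := by
  have hproj : (1 - C * Cᵀ)ᴴ * (1 - C * Cᵀ) = 1 - C * Cᵀ := by
    simp only [conjTranspose_eq_transpose_of_trivial, transpose_sub, transpose_one, transpose_mul,
      transpose_transpose, Matrix.sub_mul, Matrix.mul_sub, Matrix.one_mul, Matrix.mul_one,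
      Matrix.mul_assoc, ← Matrix.mul_assoc Cᵀ C, hC]
    abel
  have h := (posSemidef_conjTranspose_mul_self (1 - C * Cᵀ)).diag_nonneg (i := j)
  rw [hproj, Matrix.sub_apply, one_apply_eq] at h
  linarith

lemma sum_mul_le_sum_of_threshold {ι : Type*} [Fintype ι] {e c : ι → ℝ} {S : Finset ι} {t : ℝ}
    (hS : ∀ j ∈ S, t ≤ e j) (hSc : ∀ j ∉ S, e j ≤ t) (hc0 : ∀ j, 0 ≤ c j)
    (hc1 : ∀ j, c j ≤ 1) (hc : ∑ j, c j = S.card) :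
    ∑ j, e j * c j ≤ ∑ j ∈ S, e j := by
  classical
  -- `(e j - t) * (c j - 1) ≤ 0` on `S` and `(e j - t) * c j ≤ 0` off `S`
  have key : ∀ j, e j * c j ≤ (if j ∈ S then e j - t else 0) + t * c j := by
    intro j
    split_ifs with hj
    · nlinarith [hS j hj, hc1 j]
    · nlinarith [hSc j hj, hc0 j]
  calc ∑ j, e j * c j ≤ ∑ j, ((if j ∈ S then e j - t else 0) + t * c j) :=
        Finset.sum_le_sum fun j _ => key j
    _ = ∑ j ∈ S, e j := by
      rw [Finset.sum_add_distrib, ← Finset.mul_sum, hc, Finset.sum_ite_mem, Finset.univ_inter,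
        Finset.sum_sub_distrib, Finset.sum_const, nsmul_eq_mul]
      ring

lemma sum_mul_le_sum_castLE_of_antitone {m k : ℕ} (hkm : k ≤ m) {e c : Fin m → ℝ}
    (he : Antitone e) (hc0 : ∀ j, 0 ≤ c j) (hc1 : ∀ j, c j ≤ 1) (hc : ∑ j, c j = k) :
    ∑ j, e j * c j ≤ ∑ i : Fin k, e (Fin.castLE hkm i) := by
  obtain _ | m := m
  · obtain rfl : k = 0 := by omega
    simp
  have hS : ∀ j, j ∈ Finset.univ.map (Fin.castLEEmb hkm) ↔ (j : ℕ) < k := by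
    intro j
    simp only [Finset.mem_map, Finset.mem_univ, true_and, Fin.castLEEmb_apply]
    exact ⟨by rintro ⟨i, rfl⟩; exact i.isLt, fun h => ⟨⟨j, h⟩, rfl⟩⟩
  rw [show ∑ i : Fin k, e (Fin.castLE hkm i) = ∑ j ∈ Finset.univ.map (Fin.castLEEmb hkm), e j
    by rw [Finset.sum_map]; rfl]
  -- for `k = 0` the index `k - 1` truncates to `0`, which is harmless as the top set is then empty
  refine sum_mul_le_sum_of_threshold (t := e ⟨k - 1, by omega⟩) (fun j hj => he ?_)
    (fun j hj => he ?_) hc0 hc1 (by simpa using hc)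
  · change (j : ℕ) ≤ k - 1
    have := (hS j).1 hj
    omega
  · change k - 1 ≤ (j : ℕ)
    have := (hS j).not.1 hj
    omega

theorem trace_transpose_mul_mul_le_sum_castLE {m k : ℕ} (hkm : k ≤ m)
    {K : Matrix (Fin m) (Fin m) ℝ} {w : Fin m → Fin m → ℝ} {e : Fin m → ℝ}
    (hw : ∀ i j, w i ⬝ᵥ w j = if i = j then 1 else 0) (he : ∀ i, K *ᵥ w i = e i • w i)
    (he_anti : Antitone e) {Q : Matrix (Fin m) (Fin k) ℝ} (hQ : Qᵀ * Q = 1) :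
    trace (Qᵀ * K * Q) ≤ ∑ i : Fin k, e (Fin.castLE hkm i) := by
  set C := of w * Q
  have hW : (of w)ᵀ * of w = 1 := mul_eq_one_comm.mp (of_mul_transpose_of_eq_one hw)
  have hK : K = (of w)ᵀ * diagonal e * of w := by
    rw [← mul_transpose_of_eq_transpose_of_mul_diagonal he, Matrix.mul_assoc, hW, Matrix.mul_one]
  have hC : Cᵀ * C = 1 := by
    rw [transpose_mul, Matrix.mul_assoc, ← Matrix.mul_assoc (of w)ᵀ, hW, Matrix.one_mul, hQ]
  have htrace : trace (Qᵀ * K * Q) = ∑ j, e j * (C * Cᵀ) j j := by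
    rw [hK, show Qᵀ * ((of w)ᵀ * diagonal e * of w) * Q = Cᵀ * (diagonal e * C) by
      simp only [C, transpose_mul, Matrix.mul_assoc], trace_mul_comm, Matrix.mul_assoc]
    simp only [trace, Matrix.diag, diagonal_mul]
  rw [htrace]
  refine sum_mul_le_sum_castLE_of_antitone hkm he_anti (fun j => ?_)
    (diag_mul_transpose_le_one hC) ?_
  · simpa using (posSemidef_self_mul_conjTranspose C).diag_nonneg (i := j)
  · change trace (C * Cᵀ) = k
    rw [trace_mul_comm, hC, trace_one, Fintype.card_fin]

theorem regularised_pca_general {n m d g k : ℕ} (hkm : k ≤ m)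
    (A : Matrix (Fin n) (Fin m) ℝ)
    (D : Matrix (Fin d) (Fin n) ℝ) (G : Matrix (Fin g) (Fin m) ℝ)
    (lam mu : ℝ) (hlam : 0 ≤ lam)
    (L : Matrix (Fin n) (Fin n) ℝ) (hL : L = Dᵀ * D)
    (M : Matrix (Fin m) (Fin m) ℝ) (hM : M = Gᵀ * G)
    (F : Matrix (Fin n) (Fin k) ℝ → Matrix (Fin m) (Fin k) ℝ → ℝ)
    (hF : ∀ P Q, F P Q = frobSq (A - P * Qᵀ) + lam * frobSq (D * P) + mu * frobSq (G * Q))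
    (K : Matrix (Fin m) (Fin m) ℝ)
    (hK : K = Aᵀ * (1 + lam • L)⁻¹ * A - mu • M)
    -- a complete orthonormal system of eigenvectors of `K`,
    -- with eigenvalues sorted in decreasing order
    (w : Fin m → (Fin m → ℝ)) (eig : Fin m → ℝ)
    (hortho : ∀ i j, w i ⬝ᵥ w j = if i = j then (1 : ℝ) else 0)
    (heig : ∀ i, K *ᵥ w i = eig i • w i)
    (hsorted : ∀ i j, i ≤ j → eig j ≤ eig i)
    (Q : Matrix (Fin m) (Fin k) ℝ) (hQ : Q = Matrix.of fun a i => w (Fin.castLE hkm i) a)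
    (P : Matrix (Fin n) (Fin k) ℝ) (hP : P = (1 + lam • L)⁻¹ * A * Q) :
    Qᵀ * Q = 1 ∧
    (∀ (P' : Matrix (Fin n) (Fin k) ℝ) (Q' : Matrix (Fin m) (Fin k) ℝ),
        Q'ᵀ * Q' = 1 → F P Q ≤ F P' Q') ∧
    F P Q = Matrix.trace (A * Aᵀ) - ∑ i : Fin k, eig (Fin.castLE hkm i) := by
  subst hL hM
  set B := 1 + lam • (Dᵀ * D)
  have hB : B.PosDef := posDef_one_add_smul_transpose_mul_self D hlam
  have hF_eq : ∀ P' Q', Q'ᵀ * Q' = 1 → F P' Q' = trace (A * Aᵀ)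
      + trace ((P' - B⁻¹ * (A * Q'))ᵀ * B * (P' - B⁻¹ * (A * Q'))) - trace (Q'ᵀ * K * Q') :=
    fun P' Q' hQ' => by
      rw [hF, hK, regularised_objective_eq A D G lam mu
        ((isUnit_iff_isUnit_det B).mp hB.isUnit) P' hQ']
  have hortho_top : ∀ i j : Fin k, w (Fin.castLE hkm i) ⬝ᵥ w (Fin.castLE hkm j)
      = if i = j then 1 else 0 := fun i j => by
    simp [hortho, (Fin.castLE_injective hkm).eq_iff]
  replace hQ : Q = (of fun i => w (Fin.castLE hkm i))ᵀ := hQ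
  have hQQ : Qᵀ * Q = 1 := by
    rw [hQ, transpose_transpose]
    exact of_mul_transpose_of_eq_one hortho_top
  have hFPQ : F P Q = trace (A * Aᵀ) - ∑ i : Fin k, eig (Fin.castLE hkm i) := by
    rw [hF_eq P Q hQQ, hP, Matrix.mul_assoc B⁻¹ A Q, sub_self, hQ, transpose_transpose,
      trace_of_mul_mul_transpose_of hortho_top fun i => heig _]
    simp
  refine ⟨hQQ, fun P' Q' hQ' => ?_, hFPQ⟩
  have hsquare := (hB.posSemidef.conjTranspose_mul_mul_same (P' - B⁻¹ * (A * Q'))).trace_nonneg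
  rw [conjTranspose_eq_transpose_of_trivial] at hsquare
  have hKyFan := trace_transpose_mul_mul_le_sum_castLE hkm hortho heig hsorted hQ'
  rw [hFPQ, hF_eq P' Q' hQ']
  linarith

/-- **Regularised PCA.** Minimising
`F(P,Q) = ‖A - PQᵀ‖² + λ‖DP‖² + μ‖GQ‖²` subject to `QᵀQ = Iₖ` is solved by
taking the columns of `Q` to be orthonormal eigenvectors of
`K = Aᵀ(Iₙ + λL)⁻¹A - μM` for its `k` largest eigenvalues, and
`P = (Iₙ + λL)⁻¹ A Q`; the minimal value is `Tr(AAᵀ)` minus the sum of the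
`k` largest eigenvalues of `K`. -/
theorem regularised_pca {n m d g r k : ℕ} (hkr : k ≤ r) (hkm : k ≤ m)
    (A : Matrix (Fin n) (Fin m) ℝ) (hrank : A.rank = r)
    (D : Matrix (Fin d) (Fin n) ℝ) (G : Matrix (Fin g) (Fin m) ℝ)
    (lam mu : ℝ) (hlam : 0 ≤ lam) (hmu : 0 ≤ mu)
    (L : Matrix (Fin n) (Fin n) ℝ) (hL : L = Dᵀ * D)
    (M : Matrix (Fin m) (Fin m) ℝ) (hM : M = Gᵀ * G)
    (F : Matrix (Fin n) (Fin k) ℝ → Matrix (Fin m) (Fin k) ℝ → ℝ)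
    (hF : ∀ P Q, F P Q = frobSq (A - P * Qᵀ) + lam * frobSq (D * P) + mu * frobSq (G * Q))
    (K : Matrix (Fin m) (Fin m) ℝ)
    (hK : K = Aᵀ * (1 + lam • L)⁻¹ * A - mu • M)
    -- a complete orthonormal system of eigenvectors of `K`,
    -- with eigenvalues sorted in decreasing order
    (w : Fin m → (Fin m → ℝ)) (eig : Fin m → ℝ)
    (hortho : ∀ i j, w i ⬝ᵥ w j = if i = j then (1 : ℝ) else 0)
    (heig : ∀ i, K *ᵥ w i = eig i • w i)
    (hsorted : ∀ i j, i ≤ j → eig j ≤ eig i)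
    (Q : Matrix (Fin m) (Fin k) ℝ) (hQ : Q = Matrix.of fun a i => w (Fin.castLE hkm i) a)
    (P : Matrix (Fin n) (Fin k) ℝ) (hP : P = (1 + lam • L)⁻¹ * A * Q) :
    Qᵀ * Q = 1 ∧
    (∀ (P' : Matrix (Fin n) (Fin k) ℝ) (Q' : Matrix (Fin m) (Fin k) ℝ),
        Q'ᵀ * Q' = 1 → F P Q ≤ F P' Q') ∧
    F P Q = Matrix.trace (A * Aᵀ) - ∑ i : Fin k, eig (Fin.castLE hkm i) :=
  regularised_pca_general hkm A D G lam mu hlam L hL M hM F hF K hK w eig hortho heig hsorted Q hQ P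
    hP
end
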